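/- The host is persistent in the host–parasite ecological model under either of the following conditions: if d > r₂, or if d < r₂ and r₁/a > K₂(1 − d/r₂), then every solution t ↦ (x₁(t), x₂(t)) on [0, ∞) with x₁(0) > 0 and x₂(0) ≥ 0 satisfies liminf_{t→∞} x₁(t) > 0. -/

import Mathlib

/-!
For an exponent `Q` with `a K₂ / r₂ < Q` and `Q (r₂ - d) < r₁` (such `Q` exists exactly under the
hypothesis on the parameters), `V = log x₁ - Q log (θ + x₂)` serves as a Lyapunov function near the
boundary `x₁ = 0`. Along solutions, `(θ + x₂) V'` is bounded below by a quadratic in `x₂` with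
positive leading coefficient `Q r₂ / K₂ - a`. While `x₁ ≤ δ`, its constant term `r₁ θ (1 - δ / K₁)`
is positive and, for small `θ` and `δ`, its linear coefficient `r₁ - Q (r₂ - d) - O(θ + δ)` is
nonnegative; while `x₁ > δ` but `V` is very negative, `x₂` exceeds a threshold `Z` beyond which the
leading term wins. So `V` never drops below `min (V 0) (log δ - Q log (θ + Z))`, which bounds `x₁`
away from `0`. The a priori facts `x₁ > 0`, `x₂ ≥ 0` come from uniqueness of the zero solution of
`f' = f g`, and `x₁ ≤ max (x₁ 0) (2 K₁)` from a barrier argument.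
-/

open Set Filter Topology

theorem eqOn_zero_of_hasDerivAt_mul {f g : ℝ → ℝ} {a b t₀ : ℝ}
    (hf : ∀ t ∈ Icc a b, HasDerivAt f (f t * g t) t) (hg : ContinuousOn g (Icc a b))
    (ht₀ : t₀ ∈ Icc a b) (h : f t₀ = 0) : EqOn f 0 (Icc a b) := by
  obtain ⟨C, hC⟩ := isCompact_Icc.exists_bound_of_continuousOn hg
  have hv : ∀ t ∈ Icc a b, LipschitzOnWith C.toNNReal (fun y : ℝ => g t • y) univ :=
    fun t ht => ((lipschitzWith_smul (g t)).weaken <| by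
      rw [← NNReal.coe_le_coe, coe_nnnorm]; exact (hC t ht).trans (le_max_left _ _)).lipschitzOnWith
  have hfc : ContinuousOn f (Icc a b) := fun t ht => (hf t ht).continuousAt.continuousWithinAt
  have hf' : ∀ t ∈ Icc a b, HasDerivAt f (g t • f t) t := fun t ht => by
    simpa only [smul_eq_mul, mul_comm] using hf t ht
  have hzero : ∀ t, HasDerivAt (0 : ℝ → ℝ) (g t • (0 : ℝ → ℝ) t) t := fun t => by simp
  rw [← Icc_union_Icc_eq_Icc ht₀.1 ht₀.2]
  have hl : Ioc a t₀ ⊆ Icc a b := fun t ht => ⟨ht.1.le, ht.2.trans ht₀.2⟩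
  have hr : Ico t₀ b ⊆ Icc a b := fun t ht => ⟨ht₀.1.trans ht.1, ht.2.le⟩
  refine EqOn.union ?_ ?_
  · exact ODE_solution_unique_of_mem_Icc_left (fun t ht => hv t (hl ht))
      (hfc.mono (Icc_subset_Icc_right ht₀.2)) (fun t ht => (hf' t (hl ht)).hasDerivWithinAt)
      (fun _ _ => mem_univ _) continuousOn_const (fun t _ => (hzero t).hasDerivWithinAt)
      (fun _ _ => mem_univ _) h
  · exact ODE_solution_unique_of_mem_Icc_right (fun t ht => hv t (hr ht))
      (hfc.mono (Icc_subset_Icc_left ht₀.1)) (fun t ht => (hf' t (hr ht)).hasDerivWithinAt)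
      (fun _ _ => mem_univ _) continuousOn_const (fun t _ => (hzero t).hasDerivWithinAt)
      (fun _ _ => mem_univ _) h

theorem pos_of_hasDerivAt_mul {f g : ℝ → ℝ} (hf : ∀ t, 0 ≤ t → HasDerivAt f (f t * g t) t)
    (hg : ∀ t, 0 ≤ t → 0 ≤ f t → ContinuousAt g t) (h0 : 0 < f 0) {t : ℝ} (ht : 0 ≤ t) :
    0 < f t := by
  -- At the first zero `s` of `f`, `f ≥ 0` on `[0, s]` makes `g` continuous there, so uniqueness
  -- forces `f = 0` on `[0, s]`.
  by_contra! hft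
  have hfc : ContinuousOn f (Icc 0 t) := fun u hu => (hf u hu.1).continuousAt.continuousWithinAt
  set S := Icc 0 t ∩ f ⁻¹' {0}
  have hS : S.Nonempty := intermediate_value_Icc' ht hfc ⟨hft, h0.le⟩
  have hSb : BddBelow S := ⟨0, fun u hu => hu.1.1⟩
  have hsS : sInf S ∈ S :=
    (hfc.preimage_isClosed_of_isClosed isClosed_Icc isClosed_singleton).csInf_mem hS hSb
  have hnonneg : ∀ u ∈ Icc 0 (sInf S), 0 ≤ f u := by
    intro u hu
    by_contra! hfu
    obtain ⟨v, hv, hfv⟩ := intermediate_value_Icc' hu.1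
      (hfc.mono (Icc_subset_Icc_right (hu.2.trans hsS.1.2))) ⟨hfu.le, h0.le⟩
    have : sInf S ≤ v := csInf_le hSb ⟨⟨hv.1, hv.2.trans (hu.2.trans hsS.1.2)⟩, hfv⟩
    have hus : u = sInf S := le_antisymm hu.2 (this.trans hv.2)
    exact hfu.ne (hus ▸ hsS.2)
  have := eqOn_zero_of_hasDerivAt_mul (fun u hu => hf u hu.1)
    (fun u hu => (hg u hu.1 (hnonneg u hu)).continuousWithinAt) (right_mem_Icc.2 hsS.1.1) hsS.2
    (left_mem_Icc.2 hsS.1.1)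
  exact h0.ne' this

theorem nonneg_of_hasDerivAt_mul {f g : ℝ → ℝ} (hf : ∀ t, 0 ≤ t → HasDerivAt f (f t * g t) t)
    (hg : ∀ t, 0 ≤ t → ContinuousAt g t) (h0 : 0 ≤ f 0) {t : ℝ} (ht : 0 ≤ t) : 0 ≤ f t := by
  rcases h0.eq_or_lt with h0 | h0
  · exact (eqOn_zero_of_hasDerivAt_mul (fun u hu => hf u hu.1)
      (fun u hu => (hg u hu.1).continuousWithinAt) (left_mem_Icc.2 ht) h0.symm
      (right_mem_Icc.2 ht)).ge
  · exact (pos_of_hasDerivAt_mul hf (fun u hu _ => hg u hu) h0 ht).le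

theorem le_of_hasDerivAt_of_deriv_neg_of_eq {f f' : ℝ → ℝ} {c : ℝ}
    (hf : ∀ t, 0 ≤ t → HasDerivAt f (f' t) t) (h0 : f 0 ≤ c)
    (hc : ∀ t, 0 ≤ t → f t = c → f' t < 0) {t : ℝ} (ht : 0 ≤ t) : f t ≤ c :=
  image_le_of_deriv_right_lt_deriv_boundary (B := fun _ => c)
    (fun u hu => (hf u hu.1).continuousAt.continuousWithinAt)
    (fun u hu => (hf u hu.1).hasDerivWithinAt) h0 (fun u => hasDerivAt_const u c)
    (fun u hu => hc u hu.1) ⟨ht, le_rfl⟩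

theorem le_of_hasDerivAt_of_deriv_pos_of_eq {f f' : ℝ → ℝ} {c : ℝ}
    (hf : ∀ t, 0 ≤ t → HasDerivAt f (f' t) t) (h0 : c ≤ f 0)
    (hc : ∀ t, 0 ≤ t → f t = c → 0 < f' t) {t : ℝ} (ht : 0 ≤ t) : c ≤ f t :=
  neg_le_neg_iff.1 <| le_of_hasDerivAt_of_deriv_neg_of_eq (fun u hu => (hf u hu).neg)
    (neg_le_neg h0) (fun u hu hu' => neg_neg_iff_pos.2 (hc u hu (neg_inj.1 hu'))) ht

theorem eventually_quadratic_pos {A : ℝ} (hA : 0 < A) (B C : ℝ) :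
    ∀ᶠ v in atTop, 0 < A * v ^ 2 + B * v + C := by
  have : Tendsto (fun v : ℝ => v * (A * v + B) + C) atTop atTop :=
    tendsto_atTop_add_const_right _ C <| tendsto_id.atTop_mul_atTop₀ <|
      tendsto_atTop_add_const_right _ B (tendsto_id.const_mul_atTop hA)
  filter_upwards [this.eventually_gt_atTop 0] with v hv
  linarith

section Lyapunov

variable {x y G H : ℝ → ℝ} {Q θ : ℝ}

theorem hasDerivAt_log_sub_mul_log
    (hx : ∀ t, 0 ≤ t → HasDerivAt x (x t * G t) t) (hy : ∀ t, 0 ≤ t → HasDerivAt y (y t * H t) t)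
    (hxpos : ∀ t, 0 ≤ t → 0 < x t) (hθy : ∀ t, 0 ≤ t → 0 < θ + y t) {t : ℝ} (ht : 0 ≤ t) :
    HasDerivAt (fun s => Real.log (x s) - Q * Real.log (θ + y s))
      (((θ + y t) * G t - Q * y t * H t) / (θ + y t)) t := by
  have hx0 := (hxpos t ht).ne'
  have hθy0 := (hθy t ht).ne'
  refine (((hx t ht).log hx0).sub ((((hy t ht).const_add θ).log hθy0).const_mul Q)).congr_deriv ?_
  field_simp

theorem exists_pos_le_of_lyapunov {δ Z : ℝ} (hQ : 0 < Q) (hθ : 0 < θ) (hδ : 0 < δ) (hZ : 0 ≤ Z)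
    (hx : ∀ t, 0 ≤ t → HasDerivAt x (x t * G t) t) (hy : ∀ t, 0 ≤ t → HasDerivAt y (y t * H t) t)
    (hxpos : ∀ t, 0 ≤ t → 0 < x t) (hynn : ∀ t, 0 ≤ t → 0 ≤ y t)
    (hL : ∀ t, 0 ≤ t → (x t ≤ δ ∨ Z ≤ y t) → 0 < (θ + y t) * G t - Q * y t * H t) :
    ∃ ρ > 0, ∀ t, 0 ≤ t → ρ ≤ x t := by
  have hθy : ∀ t, 0 ≤ t → 0 < θ + y t := fun t ht => by linarith [hynn t ht]
  set V := fun s => Real.log (x s) - Q * Real.log (θ + y s)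
  set c := min (V 0) (Real.log δ - Q * Real.log (θ + Z))
  have hV : ∀ t, 0 ≤ t → c ≤ V t := by
    refine fun t ht => le_of_hasDerivAt_of_deriv_pos_of_eq
      (fun s hs => hasDerivAt_log_sub_mul_log hx hy hxpos hθy hs) (min_le_left _ _) ?_ ht
    intro s hs hVs
    refine div_pos (hL s hs ?_) (hθy s hs)
    refine (le_or_gt (x s) δ).imp id fun hδx => ?_
    have : Q * Real.log (θ + Z) < Q * Real.log (θ + y s) := by
      have := Real.log_lt_log hδ hδx
      have : V s ≤ _ := hVs.le.trans (min_le_right _ _)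
      linarith
    have := (Real.log_lt_log_iff (by linarith) (hθy s hs)).1 (lt_of_mul_lt_mul_left this hQ.le)
    linarith
  refine ⟨Real.exp (c + Q * Real.log θ), Real.exp_pos _, fun t ht => ?_⟩
  rw [← Real.le_log_iff_exp_le (hxpos t ht)]
  have : Q * Real.log θ ≤ Q * Real.log (θ + y t) :=
    mul_le_mul_of_nonneg_left (Real.log_le_log hθ (by linarith [hynn t ht])) hQ.le
  linarith [hV t ht]

end Lyapunov

namespace HostParasite

noncomputable def hostRate (r₁ K₁ a h u v : ℝ) : ℝ := r₁ * (1 - u / K₁) - a * v / (1 + h * a * u)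

noncomputable def parasiteRate (r₂ K₂ a h e d u v : ℝ) : ℝ :=
  e * a * u / (1 + h * a * u) - d + r₂ * (1 - v / K₂)

-- `(θ + v)` times the derivative of `log x₁ - Q log (θ + x₂)` along the flow at `(x₁, x₂) = (u, v)`.
noncomputable def lyapunovRate (r₁ r₂ K₁ K₂ a h e d Q θ u v : ℝ) : ℝ :=
  (θ + v) * hostRate r₁ K₁ a h u v - Q * v * parasiteRate r₂ K₂ a h e d u v

variable {r₁ r₂ K₁ K₂ a h e d Q θ u v : ℝ} {x₁ x₂ : ℝ → ℝ}

theorem one_le_one_add_mul (ha : 0 ≤ a) (hh : 0 ≤ h) (hu : 0 ≤ u) : 1 ≤ 1 + h * a * u := by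
  have := mul_nonneg (mul_nonneg hh ha) hu
  linarith

theorem sub_le_hostRate (ha : 0 ≤ a) (hh : 0 ≤ h) (hu : 0 ≤ u) (hv : 0 ≤ v) :
    r₁ * (1 - u / K₁) - a * v ≤ hostRate r₁ K₁ a h u v := by
  have : a * v / (1 + h * a * u) ≤ a * v :=
    div_le_self (mul_nonneg ha hv) (one_le_one_add_mul ha hh hu)
  unfold hostRate
  linarith

theorem hostRate_le (ha : 0 ≤ a) (hh : 0 ≤ h) (hu : 0 ≤ u) (hv : 0 ≤ v) :
    hostRate r₁ K₁ a h u v ≤ r₁ * (1 - u / K₁) := by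
  have : 0 ≤ a * v / (1 + h * a * u) :=
    div_nonneg (mul_nonneg ha hv) (zero_le_one.trans (one_le_one_add_mul ha hh hu))
  unfold hostRate
  linarith

theorem parasiteRate_le (ha : 0 ≤ a) (hh : 0 ≤ h) (he : 0 ≤ e) (hu : 0 ≤ u) :
    parasiteRate r₂ K₂ a h e d u v ≤ e * a * u - d + r₂ * (1 - v / K₂) := by
  have : e * a * u / (1 + h * a * u) ≤ e * a * u :=
    div_le_self (by positivity) (one_le_one_add_mul ha hh hu)
  unfold parasiteRate
  linarith

theorem continuousAt_hostRate {t : ℝ} (hx₁ : ContinuousAt x₁ t) (hx₂ : ContinuousAt x₂ t)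
    (hden : 1 + h * a * x₁ t ≠ 0) :
    ContinuousAt (fun s => hostRate r₁ K₁ a h (x₁ s) (x₂ s)) t := by
  unfold hostRate
  fun_prop (disch := assumption)

theorem continuousAt_parasiteRate {t : ℝ} (hx₁ : ContinuousAt x₁ t) (hx₂ : ContinuousAt x₂ t)
    (hden : 1 + h * a * x₁ t ≠ 0) :
    ContinuousAt (fun s => parasiteRate r₂ K₂ a h e d (x₁ s) (x₂ s)) t := by
  unfold parasiteRate
  fun_prop (disch := assumption)

theorem quadratic_le_lyapunovRate {w : ℝ} (hr₁ : 0 ≤ r₁) (hK₁ : 0 < K₁) (ha : 0 ≤ a)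
    (hh : 0 ≤ h) (he : 0 ≤ e) (hQ : 0 ≤ Q) (hθ : 0 ≤ θ) (hu : 0 ≤ u) (huw : u ≤ w)
    (hv : 0 ≤ v) :
    (θ + v) * (r₁ * (1 - w / K₁) - a * v) - Q * v * (e * a * w - d + r₂ * (1 - v / K₂))
      ≤ lyapunovRate r₁ r₂ K₁ K₂ a h e d Q θ u v := by
  have hhost : r₁ * (1 - w / K₁) - a * v ≤ hostRate r₁ K₁ a h u v := by
    refine le_trans ?_ (sub_le_hostRate ha hh hu hv)
    gcongr
  have hpar : parasiteRate r₂ K₂ a h e d u v ≤ e * a * w - d + r₂ * (1 - v / K₂) := by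
    refine (parasiteRate_le ha hh he hu).trans ?_
    gcongr
  unfold lyapunovRate
  gcongr

theorem lyapunovRate_pos_of_le {δ : ℝ} (hr₁ : 0 < r₁) (hK₁ : 0 < K₁) (hK₂ : 0 < K₂)
    (ha : 0 ≤ a) (hh : 0 ≤ h) (he : 0 ≤ e) (hQ : 0 ≤ Q) (hQa : a * K₂ < Q * r₂) (hθ : 0 < θ)
    (hδ : δ < K₁) (hδθ : r₁ * δ / K₁ + Q * e * a * δ + a * θ ≤ r₁ - Q * (r₂ - d))
    (hu : 0 ≤ u) (huδ : u ≤ δ) (hv : 0 ≤ v) :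
    0 < lyapunovRate r₁ r₂ K₁ K₂ a h e d Q θ u v := by
  refine lt_of_lt_of_le ?_ (quadratic_le_lyapunovRate hr₁.le hK₁ ha hh he hQ hθ.le hu huδ hv)
  have hR : 0 < r₁ * (1 - δ / K₁) := mul_pos hr₁ (by rw [sub_pos, div_lt_one hK₁]; exact hδ)
  have hA : 0 ≤ Q * r₂ - a * K₂ := by linarith
  have hlin : 0 ≤ r₁ - Q * (r₂ - d) - r₁ * δ / K₁ - Q * e * a * δ - a * θ := by linarith
  calc 0 < r₁ * (1 - δ / K₁) * θ + (r₁ - Q * (r₂ - d) - r₁ * δ / K₁ - Q * e * a * δ - a * θ) * v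
        + (Q * r₂ - a * K₂) / K₂ * v ^ 2 := by positivity
    _ = _ := by field_simp; ring

theorem eventually_lyapunovRate_pos {X : ℝ} (hr₁ : 0 ≤ r₁) (hK₁ : 0 < K₁) (hK₂ : 0 < K₂)
    (ha : 0 ≤ a) (hh : 0 ≤ h) (he : 0 ≤ e) (hQ : 0 ≤ Q) (hQa : a * K₂ < Q * r₂) (hθ : 0 ≤ θ) :
    ∀ᶠ v in atTop, ∀ u, 0 ≤ u → u ≤ X →
      0 < lyapunovRate r₁ r₂ K₁ K₂ a h e d Q θ u v := by
  have hA : 0 < (Q * r₂ - a * K₂) / K₂ := div_pos (by linarith) hK₂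
  filter_upwards [eventually_ge_atTop 0,
    eventually_quadratic_pos hA (r₁ * (1 - X / K₁) - a * θ - Q * (e * a * X - d + r₂))
      (θ * (r₁ * (1 - X / K₁)))] with v hv hq u hu huX
  refine (hq.trans_eq ?_).trans_le (quadratic_le_lyapunovRate hr₁ hK₁ ha hh he hQ hθ hu huX hv)
  field_simp
  ring

theorem exists_exponent (hr₁ : 0 < r₁) (hr₂ : 0 < r₂) (hK₂ : 0 < K₂)
    (ha : 0 < a) (hcond : d > r₂ ∨ (d < r₂ ∧ r₁ / a > K₂ * (1 - d / r₂))) :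
    ∃ Q, 0 < Q ∧ a * K₂ < Q * r₂ ∧ Q * (r₂ - d) < r₁ := by
  rcases hcond with hd | ⟨hd, hr₁a⟩
  · refine ⟨a * K₂ / r₂ + 1, by positivity, ?_, ?_⟩
    · rw [add_mul, div_mul_cancel₀ _ hr₂.ne']
      linarith
    · nlinarith [show 0 < a * K₂ / r₂ + 1 by positivity]
  · have hrd : 0 < r₂ - d := sub_pos.2 hd
    have : a * K₂ / r₂ < r₁ / (r₂ - d) := by
      rw [gt_iff_lt, lt_div_iff₀ ha] at hr₁a
      rw [div_lt_div_iff₀ hr₂ hrd]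
      field_simp at hr₁a
      linarith
    obtain ⟨Q, hQa, hQr⟩ := exists_between this
    refine ⟨Q, (by positivity : 0 < a * K₂ / r₂).trans hQa, ?_, ?_⟩
    · rwa [div_lt_iff₀ hr₂] at hQa
    · rwa [lt_div_iff₀ hrd] at hQr

theorem exists_lyapunovRate_pos (hr₁ : 0 < r₁) (hK₁ : 0 < K₁) (hK₂ : 0 < K₂) (ha : 0 ≤ a)
    (hh : 0 ≤ h) (he : 0 ≤ e) (hQ : 0 ≤ Q) (hQa : a * K₂ < Q * r₂) (hQr : Q * (r₂ - d) < r₁)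
    (X : ℝ) :
    ∃ θ > 0, ∃ δ > 0, ∃ Z ≥ 0, ∀ u v, 0 ≤ u → u ≤ X → 0 ≤ v → (u ≤ δ ∨ Z ≤ v) →
      0 < lyapunovRate r₁ r₂ K₁ K₂ a h e d Q θ u v := by
  obtain ⟨c, hc, hMc⟩ := exists_pos_mul_lt (sub_pos.2 hQr) (r₁ / K₁ + Q * e * a + a)
  set ε := min c (K₁ / 2)
  have hε : 0 < ε := lt_min hc (half_pos hK₁)
  have hεK : ε < K₁ := (min_le_right _ _).trans_lt (half_lt_self hK₁)
  have hεr : r₁ * ε / K₁ + Q * e * a * ε + a * ε ≤ r₁ - Q * (r₂ - d) := by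
    have := mul_le_mul_of_nonneg_left (min_le_left c (K₁ / 2))
      (show 0 ≤ r₁ / K₁ + Q * e * a + a by positivity)
    have : r₁ * ε / K₁ + Q * e * a * ε + a * ε = (r₁ / K₁ + Q * e * a + a) * ε := by ring
    linarith
  obtain ⟨Z, hZ⟩ := eventually_atTop.1
    (eventually_lyapunovRate_pos (d := d) (X := X) hr₁.le hK₁ hK₂ ha hh he hQ hQa hε.le)
  refine ⟨ε, hε, ε, hε, max Z 0, le_max_right _ _, fun u v hu huX hv hreg => ?_⟩
  rcases hreg with huε | hZv
  · exact lyapunovRate_pos_of_le hr₁ hK₁ hK₂ ha hh he hQ hQa hε hεK hεr hu huε hv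
  · exact hZ v ((le_max_left _ _).trans hZv) u hu huX

theorem host_pos (ha : 0 ≤ a) (hh : 0 ≤ h)
    (hx₁ : ∀ t, 0 ≤ t → HasDerivAt x₁ (x₁ t * hostRate r₁ K₁ a h (x₁ t) (x₂ t)) t)
    (hx₂ : ∀ t, 0 ≤ t → ContinuousAt x₂ t) (h0 : 0 < x₁ 0) {t : ℝ} (ht : 0 ≤ t) :
    0 < x₁ t :=
  pos_of_hasDerivAt_mul hx₁ (fun s hs hx₁s => continuousAt_hostRate (hx₁ s hs).continuousAt
    (hx₂ s hs) (one_pos.trans_le (one_le_one_add_mul ha hh hx₁s)).ne') h0 ht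

theorem parasite_nonneg (ha : 0 ≤ a) (hh : 0 ≤ h)
    (hx₂ : ∀ t, 0 ≤ t → HasDerivAt x₂ (x₂ t * parasiteRate r₂ K₂ a h e d (x₁ t) (x₂ t)) t)
    (hx₁ : ∀ t, 0 ≤ t → ContinuousAt x₁ t) (hx₁nn : ∀ t, 0 ≤ t → 0 ≤ x₁ t) (h0 : 0 ≤ x₂ 0)
    {t : ℝ} (ht : 0 ≤ t) : 0 ≤ x₂ t :=
  nonneg_of_hasDerivAt_mul hx₂ (fun s hs => continuousAt_parasiteRate (hx₁ s hs)
    (hx₂ s hs).continuousAt (one_pos.trans_le (one_le_one_add_mul ha hh (hx₁nn s hs))).ne') h0 ht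

theorem host_le_max (hr₁ : 0 < r₁) (hK₁ : 0 < K₁) (ha : 0 ≤ a) (hh : 0 ≤ h)
    (hx₁ : ∀ t, 0 ≤ t → HasDerivAt x₁ (x₁ t * hostRate r₁ K₁ a h (x₁ t) (x₂ t)) t)
    (hx₁pos : ∀ t, 0 ≤ t → 0 < x₁ t) (hx₂ : ∀ t, 0 ≤ t → 0 ≤ x₂ t) {t : ℝ} (ht : 0 ≤ t) :
    x₁ t ≤ max (x₁ 0) (2 * K₁) := by
  refine le_of_hasDerivAt_of_deriv_neg_of_eq hx₁ (le_max_left _ _) (fun s hs hmax => ?_) ht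
  refine mul_neg_of_pos_of_neg (hx₁pos s hs)
    ((hostRate_le ha hh (hx₁pos s hs).le (hx₂ s hs)).trans_lt ?_)
  have : K₁ < x₁ s := by linarith [le_max_right (x₁ 0) (2 * K₁)]
  exact mul_neg_of_pos_of_neg hr₁ (by rw [sub_neg, one_lt_div hK₁]; exact this)

end HostParasite

open HostParasite in
theorem host_persistence_general
    (r₁ r₂ K₁ K₂ a h e d : ℝ)
    (hr₁ : 0 < r₁) (hr₂ : 0 < r₂) (hK₁ : 0 < K₁) (hK₂ : 0 < K₂)
    (ha : 0 < a) (hh : 0 < h) (he : 0 < e)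
    (hcond : d > r₂ ∨ (d < r₂ ∧ r₁ / a > K₂ * (1 - d / r₂)))
    (x₁ x₂ : ℝ → ℝ)
    (hx₁ : ∀ t : ℝ, 0 ≤ t →
      HasDerivAt x₁ (x₁ t * (r₁ * (1 - x₁ t / K₁) - a * x₂ t / (1 + h * a * x₁ t))) t)
    (hx₂ : ∀ t : ℝ, 0 ≤ t →
      HasDerivAt x₂ (x₂ t * (e * a * x₁ t / (1 + h * a * x₁ t) - d + r₂ * (1 - x₂ t / K₂))) t)
    (hx₁0 : 0 < x₁ 0) (hx₂0 : 0 ≤ x₂ 0) :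
    0 < Filter.liminf x₁ Filter.atTop := by
  change ∀ t, 0 ≤ t → HasDerivAt x₁ (x₁ t * hostRate r₁ K₁ a h (x₁ t) (x₂ t)) t at hx₁
  change ∀ t, 0 ≤ t → HasDerivAt x₂ (x₂ t * parasiteRate r₂ K₂ a h e d (x₁ t) (x₂ t)) t at hx₂
  have hpos (t : ℝ) (ht : 0 ≤ t) : 0 < x₁ t :=
    host_pos ha.le hh.le hx₁ (fun s hs => (hx₂ s hs).continuousAt) hx₁0 ht
  have hnn (t : ℝ) (ht : 0 ≤ t) : 0 ≤ x₂ t :=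
    parasite_nonneg ha.le hh.le hx₂ (fun s hs => (hx₁ s hs).continuousAt)
      (fun s hs => (hpos s hs).le) hx₂0 ht
  have hX (t : ℝ) (ht : 0 ≤ t) : x₁ t ≤ max (x₁ 0) (2 * K₁) :=
    host_le_max hr₁ hK₁ ha.le hh.le hx₁ hpos hnn ht
  obtain ⟨Q, hQ, hQa, hQr⟩ := exists_exponent hr₁ hr₂ hK₂ ha hcond
  obtain ⟨θ, hθ, δ, hδ, Z, hZ, hL⟩ :=
    exists_lyapunovRate_pos hr₁ hK₁ hK₂ ha.le hh.le he.le hQ.le hQa hQr (max (x₁ 0) (2 * K₁))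
  obtain ⟨ρ, hρ, hρx⟩ := exists_pos_le_of_lyapunov hQ hθ hδ hZ hx₁ hx₂ hpos hnn
    fun t ht => hL _ _ (hpos t ht).le (hX t ht) (hnn t ht)
  exact hρ.trans_le <| le_liminf_of_le
    (isCoboundedUnder_ge_of_eventually_le atTop (eventually_atTop.2 ⟨0, hX⟩))
    (eventually_atTop.2 ⟨0, hρx⟩)

/-- persistence of the host. If d > r₂, or if d < r₂ and
r₁/a > K₂(1 − d/r₂), then every solution with x₁(0) > 0 and x₂(0) ≥ 0 satisfies
liminf_{t→∞} x₁(t) > 0. -/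
theorem host_persistence
    (r₁ r₂ K₁ K₂ a h e d : ℝ)
    (hr₁ : 0 < r₁) (hr₂ : 0 < r₂) (hK₁ : 0 < K₁) (hK₂ : 0 < K₂)
    (ha : 0 < a) (hh : 0 < h) (he : 0 < e) (hd : 0 ≤ d)
    (hcond : d > r₂ ∨ (d < r₂ ∧ r₁ / a > K₂ * (1 - d / r₂)))
    (x₁ x₂ : ℝ → ℝ)
    (hx₁ : ∀ t : ℝ, 0 ≤ t →
      HasDerivAt x₁ (x₁ t * (r₁ * (1 - x₁ t / K₁) - a * x₂ t / (1 + h * a * x₁ t))) t)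
    (hx₂ : ∀ t : ℝ, 0 ≤ t →
      HasDerivAt x₂ (x₂ t * (e * a * x₁ t / (1 + h * a * x₁ t) - d + r₂ * (1 - x₂ t / K₂))) t)
    (hx₁0 : 0 < x₁ 0) (hx₂0 : 0 ≤ x₂ 0) :
    0 < Filter.liminf x₁ Filter.atTop :=
  host_persistence_general r₁ r₂ K₁ K₂ a h e d hr₁ hr₂ hK₁ hK₂ ha hh he hcond x₁ x₂ hx₁ hx₂ hx₁0
    hx₂0
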